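/- arXiv:1705.06993 — 3 statements merged into one kernel-verified Lean document; each statement's English description precedes it below -/
import Mathlib

section
/- For integers 0 < i < h ≤ k < l, the inequality C(k,i)·C(l,h) > C(k,h)·C(l,i) holds, where C(n,r) denotes the binomial coefficient. -/
/- Since `C(n, r + 1) * (r + 1) = C(n, r) * (n - r)`, passing from `r` to `r + 1` multiplies
`C(l, r) / C(k, r)` by `(l - r) / (k - r) > 1`; so this ratio is strictly increasing on `r ≤ k`,
and the theorem is `C(l, i) / C(k, i) < C(l, h) / C(k, h)` with the denominators cleared. -/

theorem Nat.choose_mul_choose_succ_lt_choose_succ_mul_choose {r k l : ℕ} (hrk : r < k)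
    (hkl : k < l) : l.choose r * k.choose (r + 1) < l.choose (r + 1) * k.choose r := by
  have hpos : 0 < k.choose r * l.choose r :=
    Nat.mul_pos (Nat.choose_pos hrk.le) (Nat.choose_pos (hrk.trans hkl).le)
  refine Nat.lt_of_mul_lt_mul_left (a := r + 1) ?_
  calc (r + 1) * (l.choose r * k.choose (r + 1))
      = k.choose (r + 1) * (r + 1) * l.choose r := by ring
    _ = k.choose r * l.choose r * (k - r) := by rw [Nat.choose_succ_right_eq]; ring
    _ < k.choose r * l.choose r * (l - r) := Nat.mul_lt_mul_of_pos_left (by omega) hpos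
    _ = k.choose r * (l.choose (r + 1) * (r + 1)) := by rw [Nat.choose_succ_right_eq]; ring
    _ = (r + 1) * (l.choose (r + 1) * k.choose r) := by ring

theorem Nat.strictMonoOn_choose_div_choose {k l : ℕ} (hkl : k < l) :
    StrictMonoOn (fun r ↦ (l.choose r : ℚ) / k.choose r) (Set.Iic k) := by
  refine strictMonoOn_Iic_of_lt_succ fun r hrk ↦ ?_
  have hk : (0 : ℚ) < k.choose r := mod_cast Nat.choose_pos hrk.le
  have hk' : (0 : ℚ) < k.choose (r + 1) := mod_cast Nat.choose_pos hrk
  rw [Order.succ_eq_add_one, div_lt_div_iff₀ hk hk']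
  exact_mod_cast choose_mul_choose_succ_lt_choose_succ_mul_choose hrk hkl

theorem stmt_0_general (i h k l : ℕ) (hih : i < h) (hhk : h ≤ k) (hkl : k < l) :
    k.choose h * l.choose i < k.choose i * l.choose h := by
  have hratio := Nat.strictMonoOn_choose_div_choose hkl
    (Set.mem_Iic.2 (hih.le.trans hhk)) (Set.mem_Iic.2 hhk) hih
  have hki : (0 : ℚ) < k.choose i := mod_cast Nat.choose_pos (hih.le.trans hhk)
  have hkh : (0 : ℚ) < k.choose h := mod_cast Nat.choose_pos hhk
  rw [div_lt_div_iff₀ hki hkh] at hratio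
  rw [mul_comm (k.choose h), mul_comm (k.choose i)]
  exact_mod_cast hratio

theorem stmt_0 (i h k l : ℕ) (hi : 0 < i) (hih : i < h) (hhk : h ≤ k) (hkl : k < l) :
    k.choose h * l.choose i < k.choose i * l.choose h :=
  stmt_0_general i h k l hih hhk hkl
end

section
/- Let 1 ≤ k < l be integers and define g_k(y,ξ) = 1 - (1/4^k)∑_{h=0}^k C(k,h)·y^h/(1+ξh). Then the Jacobian determinant (∂g_k/∂y)(∂g_l/∂ξ) - (∂g_l/∂y)(∂g_k/∂ξ) equals ∑_{h=1}^k ∑_{i=1}^l C(k,h)C(l,i)·ξ·h·i·(i-h)·y^{i+h-1} / ((1+ξh)²(1+ξi)²) up to the positive factor 1/4^{k+l}, and this expression is strictly positive for all y, ξ > 0. -/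
/-!
Both partial derivatives of `g_k` are finite sums over `h = 1, …, k`, so the Jacobian is
`4^{-(k+l)}` times a double sum over `1 ≤ h ≤ k`, `1 ≤ i ≤ l` whose `(h, i)` term carries the
sign of `i - h`. The terms with `i > k` are strictly positive. On the square `1 ≤ h, i ≤ k`,
pairing `(h, i)` with `(i, h)` leaves the common positive factor times
`(i - h) (C(k,h) C(l,i) - C(k,i) C(l,h))`, which is nonnegative because `C(n,i) / C(n,h)`
increases with `n` for `h ≤ i`.
-/

open Finset

/-- The reparametrized expected k-mer distance g_k(y, ξ). -/
noncomputable def gkmer (k : ℕ) (y ξ : ℝ) : ℝ :=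
  1 - (1 / 4 ^ k) * ∑ h ∈ Finset.range (k + 1), (k.choose h : ℝ) * y ^ h / (1 + ξ * h)

theorem Finset.sum_sum_nonneg_of_add_swap_nonneg {ι M : Type*} [AddCommGroup M] [LinearOrder M]
    [IsOrderedAddMonoid M] {s : Finset ι} {f : ι → ι → M}
    (hf : ∀ i ∈ s, ∀ j ∈ s, 0 ≤ f i j + f j i) : 0 ≤ ∑ i ∈ s, ∑ j ∈ s, f i j := by
  have hdouble : 0 ≤ (∑ i ∈ s, ∑ j ∈ s, f i j) + ∑ i ∈ s, ∑ j ∈ s, f i j := by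
    nth_rw 2 [sum_comm]
    rw [← sum_add_distrib]
    exact sum_nonneg fun i hi => sum_add_distrib.symm.trans_ge <|
      sum_nonneg fun j hj => hf i hi j hj
  contrapose! hdouble
  exact add_neg hdouble hdouble

theorem Finset.sum_range_succ_eq_sum_Icc_of_eq_zero {M : Type*} [AddCommMonoid M] (k : ℕ)
    {f : ℕ → M} (hf : f 0 = 0) : ∑ h ∈ range (k + 1), f h = ∑ h ∈ Icc 1 k, f h := by
  rw [range_eq_Ico, sum_eq_sum_Ico_succ_bot k.succ_pos, hf, zero_add, ← Ico_add_one_right_eq_Icc]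
  rfl

theorem Nat.choose_mul_choose_le_choose_mul_choose {h i k l : ℕ} (hhi : h ≤ i) (hkl : k ≤ l) :
    k.choose i * l.choose h ≤ k.choose h * l.choose i := by
  refine Nat.le_of_mul_le_mul_right ?_ (Nat.choose_pos hhi)
  calc k.choose i * l.choose h * i.choose h
      = k.choose i * i.choose h * l.choose h := by ring
    _ = k.choose h * (k - h).choose (i - h) * l.choose h := by rw [Nat.choose_mul hhi]
    _ ≤ k.choose h * (l - h).choose (i - h) * l.choose h := by gcongr
    _ = k.choose h * (l.choose i * i.choose h) := by rw [Nat.choose_mul hhi]; ring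
    _ = k.choose h * l.choose i * i.choose h := by ring

namespace Gkmer

theorem hasDerivAt_left (k : ℕ) (y ξ : ℝ) :
    HasDerivAt (fun y' => gkmer k y' ξ)
      (-(1 / 4 ^ k) * ∑ h ∈ Icc 1 k, (k.choose h : ℝ) * h * y ^ (h - 1) / (1 + ξ * h)) y := by
  have hsum : HasDerivAt (fun y' => ∑ h ∈ range (k + 1), (k.choose h : ℝ) * y' ^ h / (1 + ξ * h))
      (∑ h ∈ range (k + 1), (k.choose h : ℝ) * (h * y ^ (h - 1)) / (1 + ξ * h)) y :=
    HasDerivAt.fun_sum fun h _ => ((hasDerivAt_pow h y).const_mul _).div_const _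
  refine ((hsum.const_mul (1 / 4 ^ k : ℝ)).const_sub 1).congr_deriv ?_
  rw [sum_range_succ_eq_sum_Icc_of_eq_zero k (by simp), neg_mul, neg_inj]
  simp only [mul_assoc]

theorem hasDerivAt_right (k : ℕ) (y : ℝ) {ξ : ℝ} (hξ : 0 ≤ ξ) :
    HasDerivAt (fun ξ' => gkmer k y ξ')
      ((1 / 4 ^ k) * ∑ i ∈ Icc 1 k, (k.choose i : ℝ) * i * y ^ i / (1 + ξ * i) ^ 2) ξ := by
  have hsum : HasDerivAt (fun ξ' => ∑ i ∈ range (k + 1), (k.choose i : ℝ) * y ^ i / (1 + ξ' * i))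
      (∑ i ∈ range (k + 1), -((k.choose i : ℝ) * i * y ^ i / (1 + ξ * i) ^ 2)) ξ := by
    refine HasDerivAt.fun_sum fun i _ => ?_
    have hlin : HasDerivAt (fun ξ' : ℝ => 1 + ξ' * i) i ξ := by
      simpa using ((hasDerivAt_id ξ).mul_const (i : ℝ)).const_add 1
    refine ((hasDerivAt_const ξ ((k.choose i : ℝ) * y ^ i)).div hlin
      (by positivity)).congr_deriv ?_
    ring
  refine ((hsum.const_mul (1 / 4 ^ k : ℝ)).const_sub 1).congr_deriv ?_
  rw [sum_neg_distrib, mul_neg, neg_neg,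
    sum_range_succ_eq_sum_Icc_of_eq_zero k (by simp)]

noncomputable def jacobianTerm (k l : ℕ) (y ξ : ℝ) (h i : ℕ) : ℝ :=
  (k.choose h : ℝ) * (l.choose i : ℝ) * ξ * h * i * ((i : ℝ) - h) *
    y ^ (i + h - 1) / ((1 + ξ * h) ^ 2 * (1 + ξ * i) ^ 2)

theorem mul_sub_mul_eq_jacobianTerm (k l : ℕ) (y : ℝ) {ξ : ℝ} (hξ : 0 ≤ ξ) {h i : ℕ}
    (hh : 1 ≤ h) (hi : 1 ≤ i) :
    (l.choose i : ℝ) * i * y ^ (i - 1) / (1 + ξ * i)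
        * ((k.choose h : ℝ) * h * y ^ h / (1 + ξ * h) ^ 2)
      - (k.choose h : ℝ) * h * y ^ (h - 1) / (1 + ξ * h)
        * ((l.choose i : ℝ) * i * y ^ i / (1 + ξ * i) ^ 2)
      = jacobianTerm k l y ξ h i := by
  obtain ⟨h, rfl⟩ := Nat.exists_eq_add_of_le' hh
  obtain ⟨i, rfl⟩ := Nat.exists_eq_add_of_le' hi
  rw [jacobianTerm, show i + 1 + (h + 1) - 1 = i + h + 1 by omega]
  have hh₀ : (1 + ξ * (h + 1 : ℕ) : ℝ) ≠ 0 := by positivity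
  have hi₀ : (1 + ξ * (i + 1 : ℕ) : ℝ) ≠ 0 := by positivity
  simp only [Nat.add_sub_cancel]
  field_simp
  ring

theorem jacobian_eq (k l : ℕ) (y : ℝ) {ξ : ℝ} (hξ : 0 ≤ ξ) :
    deriv (fun y' => gkmer k y' ξ) y * deriv (fun ξ' => gkmer l y ξ') ξ
      - deriv (fun y' => gkmer l y' ξ) y * deriv (fun ξ' => gkmer k y ξ') ξ
      = (1 / 4 ^ (k + l)) * ∑ h ∈ Icc 1 k, ∑ i ∈ Icc 1 l, jacobianTerm k l y ξ h i := by
  rw [(hasDerivAt_left k y ξ).deriv, (hasDerivAt_right l y hξ).deriv,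
    (hasDerivAt_left l y ξ).deriv, (hasDerivAt_right k y hξ).deriv]
  have hsum : ∑ h ∈ Icc 1 k, ∑ i ∈ Icc 1 l, jacobianTerm k l y ξ h i
      = (∑ i ∈ Icc 1 l, (l.choose i : ℝ) * i * y ^ (i - 1) / (1 + ξ * i))
          * (∑ h ∈ Icc 1 k, (k.choose h : ℝ) * h * y ^ h / (1 + ξ * h) ^ 2)
        - (∑ h ∈ Icc 1 k, (k.choose h : ℝ) * h * y ^ (h - 1) / (1 + ξ * h))
          * (∑ i ∈ Icc 1 l, (l.choose i : ℝ) * i * y ^ i / (1 + ξ * i) ^ 2) := by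
    rw [sum_mul_sum, sum_mul_sum, sum_comm (s := Icc 1 l), ← sum_sub_distrib]
    refine sum_congr rfl fun h hh => ?_
    rw [← sum_sub_distrib]
    refine sum_congr rfl fun i hi => ?_
    exact (mul_sub_mul_eq_jacobianTerm k l y hξ (mem_Icc.1 hh).1 (mem_Icc.1 hi).1).symm
  rw [hsum, pow_add]
  ring

theorem jacobianTerm_add_swap_nonneg {k l : ℕ} (hkl : k ≤ l) {y ξ : ℝ} (hy : 0 ≤ y) (hξ : 0 ≤ ξ)
    (h i : ℕ) :
    0 ≤ jacobianTerm k l y ξ h i + jacobianTerm k l y ξ i h := by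
  have hchoose :
      0 ≤ ((k.choose h : ℝ) * l.choose i - k.choose i * l.choose h) * ((i : ℝ) - h) := by
    rcases le_total h i with hhi | hih
    · have := Nat.choose_mul_choose_le_choose_mul_choose hhi hkl
      exact mul_nonneg (sub_nonneg.2 (by exact_mod_cast this))
        (sub_nonneg.2 (by exact_mod_cast hhi))
    · have := Nat.choose_mul_choose_le_choose_mul_choose hih hkl
      exact mul_nonneg_of_nonpos_of_nonpos (sub_nonpos.2 (by exact_mod_cast this))
        (sub_nonpos.2 (by exact_mod_cast hih))
  have hpair : jacobianTerm k l y ξ h i + jacobianTerm k l y ξ i h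
      = ((k.choose h : ℝ) * l.choose i - k.choose i * l.choose h) * ((i : ℝ) - h)
        * (ξ * h * i * y ^ (i + h - 1)) / ((1 + ξ * h) ^ 2 * (1 + ξ * i) ^ 2) := by
    rw [jacobianTerm, jacobianTerm, add_comm h i]
    field_simp
    ring
  rw [hpair]
  positivity

theorem jacobianTerm_pos {k l : ℕ} {y ξ : ℝ} (hy : 0 < y) (hξ : 0 < ξ) {h i : ℕ}
    (hh₁ : 1 ≤ h) (hh : h ≤ k) (hhi : h < i) (hi : i ≤ l) : 0 < jacobianTerm k l y ξ h i := by
  have hk : (0 : ℝ) < k.choose h := by exact_mod_cast Nat.choose_pos hh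
  have hl : (0 : ℝ) < l.choose i := by exact_mod_cast Nat.choose_pos hi
  have hh₀ : (0 : ℝ) < h := by exact_mod_cast hh₁
  have hi₀ : (0 : ℝ) < i := Nat.cast_pos.2 (by omega)
  have hih : (0 : ℝ) < (i : ℝ) - h := sub_pos.2 (by exact_mod_cast hhi)
  unfold jacobianTerm
  positivity

end Gkmer

open Gkmer in
theorem stmt_7 (k l : ℕ) (hk : 1 ≤ k) (hkl : k < l) (y ξ : ℝ) (hy : 0 < y) (hξ : 0 < ξ) :
    (deriv (fun y' => gkmer k y' ξ) y * deriv (fun ξ' => gkmer l y ξ') ξ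
      - deriv (fun y' => gkmer l y' ξ) y * deriv (fun ξ' => gkmer k y ξ') ξ
      = (1 / 4 ^ (k + l)) * ∑ h ∈ Finset.Icc 1 k, ∑ i ∈ Finset.Icc 1 l,
          (k.choose h : ℝ) * (l.choose i : ℝ) * ξ * h * i * ((i : ℝ) - h) *
            y ^ (i + h - 1) / ((1 + ξ * h) ^ 2 * (1 + ξ * i) ^ 2)) ∧
    0 < deriv (fun y' => gkmer k y' ξ) y * deriv (fun ξ' => gkmer l y ξ') ξ
      - deriv (fun y' => gkmer l y' ξ) y * deriv (fun ξ' => gkmer k y ξ') ξ := by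
  refine ⟨jacobian_eq k l y hξ.le, ?_⟩
  rw [jacobian_eq k l y hξ.le]
  have hsplit : Icc 1 l = Icc 1 k ∪ Icc (k + 1) l := by
    ext x
    simp only [mem_Icc, mem_union]
    omega
  have hdisj : Disjoint (Icc 1 k) (Icc (k + 1) l) := by
    simp only [disjoint_left, mem_Icc]
    omega
  simp only [hsplit, sum_union hdisj, sum_add_distrib]
  have hsquare : 0 ≤ ∑ h ∈ Icc 1 k, ∑ i ∈ Icc 1 k, jacobianTerm k l y ξ h i :=
    sum_sum_nonneg_of_add_swap_nonneg fun h _ i _ =>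
      jacobianTerm_add_swap_nonneg hkl.le hy.le hξ.le h i
  have hrest : 0 < ∑ h ∈ Icc 1 k, ∑ i ∈ Icc (k + 1) l, jacobianTerm k l y ξ h i := by
    refine sum_pos (fun h hh => sum_pos (fun i hi => ?_) (nonempty_Icc.2 hkl)) (nonempty_Icc.2 hk)
    rw [mem_Icc] at hh hi
    exact jacobianTerm_pos hy hξ hh.1 hh.2 (by omega) hi.2
  positivity
end

section
/- Let 1 ≤ k < l be integers. The map ψ: (0,∞)² → ℝ² given by ψ(y,ξ) = (g_k(y,ξ), g_l(y,ξ)), where g_k(y,ξ) = 1 - (1/4^k)∑_{h=0}^k C(k,h)·y^h/(1+ξh), is injective. -/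
/-!
Write `F_m(y, ξ) = ∑_{h ≤ m} C(m,h) yʰ / (1 + ξh)` and suppose `(y₁, ξ₁)`, `(y₂, ξ₂)` with
`ξ₁ < ξ₂` have equal `F_k`. The differences `d h = y₂ʰ/(1 + ξ₂h) - y₁ʰ/(1 + ξ₁h)` vanish at
`h = 0` and change sign at most once for `h ≥ 1`, from negative to positive, because
`(log (1 + ξ₂x) - log (1 + ξ₁x)) / x` decreases in `x`. As `∑ C(k,h) d h = 0` and
`C(l,h) / C(k,h)` increases in `h`, reweighting by `C(l,h)` makes the sum over `h ≤ k`
nonnegative, and the extra terms `k < h ≤ l` are positive, so `F_l(y₁, ξ₁) < F_l(y₂, ξ₂)`.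
When `ξ₁ = ξ₂`, `F_k` is strictly increasing in `y`.
-/

open Finset

noncomputable def kmerSum (k : ℕ) (y ξ : ℝ) : ℝ :=
  ∑ h ∈ range (k + 1), (k.choose h : ℝ) * y ^ h / (1 + ξ * h)

lemma gkmer_eq_gkmer_iff {k : ℕ} {y ξ y' ξ' : ℝ} :
    gkmer k y ξ = gkmer k y' ξ' ↔ kmerSum k y ξ = kmerSum k y' ξ' := by
  rw [gkmer, gkmer, sub_right_inj, kmerSum, kmerSum]
  exact mul_right_inj' (by positivity)

lemma kmerSum_strictMonoOn {k : ℕ} (hk : 1 ≤ k) {ξ : ℝ} (hξ : 0 ≤ ξ) :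
    StrictMonoOn (kmerSum k · ξ) (Set.Ici 0) := by
  intro y (hy : 0 ≤ y) y' _ hyy'
  have hk₁ : (0 : ℝ) < k.choose 1 := by rw [Nat.choose_one_right]; exact_mod_cast hk
  refine sum_lt_sum (fun h _ => by gcongr) ⟨1, by simp; omega, ?_⟩
  gcongr

/-- Equivalently, `(log (1 + ξ₂x) - log (1 + ξ₁x)) / x` strictly decreases in `x > 0`
whenever `0 ≤ ξ₁ < ξ₂`. -/
lemma strictMonoOn_mul_log_sub_mul_log {p q : ℝ} (hp : 0 < p) (hpq : p < q) :
    StrictMonoOn (fun ξ => q * Real.log (1 + ξ * p) - p * Real.log (1 + ξ * q))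
      (Set.Ici 0) := by
  have hq : 0 < q := hp.trans hpq
  have hpos : ∀ ξ : ℝ, 0 ≤ ξ → ∀ r : ℝ, 0 < r → 0 < 1 + ξ * r := fun ξ hξ r hr => by positivity
  apply strictMonoOn_of_deriv_pos (convex_Ici 0)
  · refine ContinuousOn.sub (continuousOn_const.mul (ContinuousOn.log (by fun_prop) ?_))
      (continuousOn_const.mul (ContinuousOn.log (by fun_prop) ?_))
    · exact fun ξ hξ => (hpos ξ hξ p hp).ne'
    · exact fun ξ hξ => (hpos ξ hξ q hq).ne'
  · intro ξ hξ
    rw [interior_Ici, Set.mem_Ioi] at hξ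
    have hderiv : ∀ r : ℝ, 0 < r →
        HasDerivAt (fun ξ => Real.log (1 + ξ * r)) (r / (1 + ξ * r)) ξ := fun r hr =>
      (((hasDerivAt_id ξ).mul_const r).const_add 1).log (hpos ξ hξ.le r hr).ne' |>.congr_deriv
        (by simp)
    have hd : HasDerivAt (fun ξ => q * Real.log (1 + ξ * p) - p * Real.log (1 + ξ * q))
        (q * (p / (1 + ξ * p)) - p * (q / (1 + ξ * q))) ξ :=
      ((hderiv p hp).const_mul q).sub ((hderiv q hq).const_mul p)
    rw [hd.deriv, sub_pos, ← mul_div_assoc, ← mul_div_assoc, mul_comm q p]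
    have := hpos ξ hξ.le p hp
    gcongr

lemma pow_div_lt_pow_div_of_le {y₁ y₂ ξ₁ ξ₂ : ℝ} {p q : ℕ} (hy₁ : 0 < y₁) (hy₂ : 0 < y₂)
    (hξ₁ : 0 ≤ ξ₁) (hξ : ξ₁ < ξ₂) (hp : 1 ≤ p) (hpq : p < q)
    (h : y₁ ^ p / (1 + ξ₁ * p) ≤ y₂ ^ p / (1 + ξ₂ * p)) :
    y₁ ^ q / (1 + ξ₁ * q) < y₂ ^ q / (1 + ξ₂ * q) := by
  have hξ₂ : 0 ≤ ξ₂ := hξ₁.trans hξ.le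
  have hpR : (0 : ℝ) < p := by exact_mod_cast hp
  have hpqR : (p : ℝ) < q := by exact_mod_cast hpq
  have hlog : ∀ (y ξ : ℝ) (n : ℕ), 0 < y → 0 ≤ ξ →
      Real.log (y ^ n / (1 + ξ * n)) = n * Real.log y - Real.log (1 + ξ * n) :=
    fun y ξ n hy hξ => by rw [Real.log_div (by positivity) (by positivity), Real.log_pow]
  rw [← Real.log_le_log_iff (by positivity) (by positivity), hlog _ _ _ hy₁ hξ₁,
    hlog _ _ _ hy₂ hξ₂] at h
  rw [← Real.log_lt_log_iff (by positivity) (by positivity), hlog _ _ _ hy₁ hξ₁,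
    hlog _ _ _ hy₂ hξ₂]
  have hmono := strictMonoOn_mul_log_sub_mul_log hpR hpqR hξ₁ hξ₂ hξ
  simp only at hmono
  have : (p : ℝ) * (Real.log (1 + ξ₂ * q) - Real.log (1 + ξ₁ * q))
      < p * (q * (Real.log y₂ - Real.log y₁)) := by nlinarith
  nlinarith [lt_of_mul_lt_mul_left this hpR.le]

lemma choose_mul_choose_succ_le_choose_succ_mul_choose {k l : ℕ} (hkl : k ≤ l) (h : ℕ) :
    l.choose h * k.choose (h + 1) ≤ l.choose (h + 1) * k.choose h := by
  refine Nat.le_of_mul_le_mul_right ?_ h.succ_pos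
  calc l.choose h * k.choose (h + 1) * (h + 1)
      = l.choose h * k.choose h * (k - h) := by rw [mul_assoc, Nat.choose_succ_right_eq]; ring
    _ ≤ l.choose h * k.choose h * (l - h) := by gcongr
    _ = l.choose (h + 1) * k.choose h * (h + 1) := by
      rw [mul_right_comm (l.choose (h + 1)), Nat.choose_succ_right_eq]; ring

lemma monotoneOn_choose_div_choose {k l : ℕ} (hkl : k ≤ l) :
    MonotoneOn (fun h => (l.choose h : ℝ) / k.choose h) ↑(range (k + 1)) := by
  rw [coe_range]
  refine monotoneOn_of_le_succ Set.ordConnected_Iio fun h _ _ hh => ?_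
  rw [Order.succ_eq_add_one, Set.mem_Iio] at hh
  rw [Order.succ_eq_add_one, div_le_div_iff₀ (by exact_mod_cast Nat.choose_pos (by omega))
    (by exact_mod_cast Nat.choose_pos (by omega))]
  exact_mod_cast choose_mul_choose_succ_le_choose_succ_mul_choose hkl h

lemma mul_sum_le_sum_of_sign_change {ι : Type*} [LinearOrder ι] {s : Finset ι} {a r d : ι → ℝ}
    {p : ι} (hr : MonotoneOn r s) (hp : p ∈ s) (ha : ∀ i ∈ s, 0 ≤ a i)
    (hneg : ∀ i ∈ s, i < p → d i ≤ 0) (hpos : ∀ i ∈ s, p ≤ i → 0 ≤ d i) :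
    r p * ∑ i ∈ s, a i * d i ≤ ∑ i ∈ s, r i * a i * d i := by
  rw [mul_sum]
  refine sum_le_sum fun i hi => ?_
  have : 0 ≤ (r i - r p) * (a i * d i) := by
    rcases lt_or_ge i p with hip | hpi
    · exact mul_nonneg_of_nonpos_of_nonpos (sub_nonpos.2 (hr hi hp hip.le))
        (mul_nonpos_of_nonneg_of_nonpos (ha i hi) (hneg i hi hip))
    · exact mul_nonneg (sub_nonneg.2 (hr hp hi hpi)) (mul_nonneg (ha i hi) (hpos i hi hpi))
  linarith

lemma exists_first_nonneg_of_sum_choose_mul_eq_zero {d : ℕ → ℝ} {k : ℕ} (hk : 1 ≤ k)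
    (hd₀ : d 0 = 0) (hsum : ∑ h ∈ range (k + 1), (k.choose h : ℝ) * d h = 0) :
    ∃ p, 1 ≤ p ∧ p ≤ k ∧ 0 ≤ d p ∧ ∀ h < p, d h ≤ 0 := by
  classical
  have hex : ∃ p, 1 ≤ p ∧ p ≤ k ∧ 0 ≤ d p := by
    by_contra! hneg
    have : ∑ h ∈ range k, (k.choose (h + 1) : ℝ) * d (h + 1) < 0 := by
      refine (sum_lt_sum_of_nonempty (nonempty_range_iff.2 (by omega))
        fun h hh => ?_).trans_eq sum_const_zero
      rw [mem_range] at hh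
      exact mul_neg_of_pos_of_neg (by exact_mod_cast Nat.choose_pos (by omega))
        (hneg _ (by omega) (by omega))
    rw [sum_range_succ', hd₀, mul_zero, add_zero] at hsum
    linarith
  obtain ⟨hp₁, hpk, hdp⟩ := Nat.find_spec hex
  refine ⟨Nat.find hex, hp₁, hpk, hdp, fun h hh => ?_⟩
  rcases Nat.eq_zero_or_pos h with rfl | hh₁
  · exact hd₀.le
  · by_contra! hdh
    exact Nat.find_min hex hh ⟨hh₁, by omega, hdh.le⟩

lemma sum_choose_mul_pos_of_sign_change {d : ℕ → ℝ} {k l : ℕ} (hk : 1 ≤ k) (hkl : k < l)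
    (hd₀ : d 0 = 0) (hcross : ∀ p q, 1 ≤ p → p < q → 0 ≤ d p → 0 < d q)
    (hsum : ∑ h ∈ range (k + 1), (k.choose h : ℝ) * d h = 0) :
    0 < ∑ h ∈ range (l + 1), (l.choose h : ℝ) * d h := by
  obtain ⟨p, hp₁, hpk, hdp, hneg⟩ := exists_first_nonneg_of_sum_choose_mul_eq_zero hk hd₀ hsum
  have hpos : ∀ h, p ≤ h → 0 ≤ d h := fun h hph =>
    hph.eq_or_lt.elim (fun e => e ▸ hdp) fun hph => (hcross p h hp₁ hph hdp).le
  have hhead : 0 ≤ ∑ h ∈ range (k + 1), (l.choose h : ℝ) * d h := by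
    have := mul_sum_le_sum_of_sign_change (a := fun h => (k.choose h : ℝ))
      (monotoneOn_choose_div_choose hkl.le) (mem_range.2 (by omega)) (fun _ _ => by positivity)
      (fun h _ => hneg h) (fun h _ => hpos h)
    rw [hsum, mul_zero] at this
    refine this.trans_eq (sum_congr rfl fun h hh => ?_)
    rw [div_mul_cancel₀ _ (by exact_mod_cast (Nat.choose_pos (by simp at hh; omega)).ne')]
  have htail : 0 < ∑ h ∈ Ico (k + 1) (l + 1), (l.choose h : ℝ) * d h := by
    refine sum_pos (fun h hh => ?_) ⟨k + 1, by simp; omega⟩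
    rw [mem_Ico] at hh
    exact mul_pos (by exact_mod_cast Nat.choose_pos (by omega)) (hcross p h hp₁ (by omega) hdp)
  rw [range_eq_Ico, ← sum_Ico_consecutive _ (Nat.zero_le (k + 1)) (by omega), ← range_eq_Ico]
  linarith

lemma kmerSum_lt_of_kmerSum_eq {k l : ℕ} (hk : 1 ≤ k) (hkl : k < l) {y₁ y₂ ξ₁ ξ₂ : ℝ}
    (hy₁ : 0 < y₁) (hy₂ : 0 < y₂) (hξ₁ : 0 ≤ ξ₁) (hξ : ξ₁ < ξ₂)
    (h : kmerSum k y₁ ξ₁ = kmerSum k y₂ ξ₂) : kmerSum l y₁ ξ₁ < kmerSum l y₂ ξ₂ := by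
  set d : ℕ → ℝ := fun h => y₂ ^ h / (1 + ξ₂ * h) - y₁ ^ h / (1 + ξ₁ * h)
  have hsub : ∀ m, kmerSum m y₂ ξ₂ - kmerSum m y₁ ξ₁
      = ∑ h ∈ range (m + 1), (m.choose h : ℝ) * d h := fun m => by
    rw [kmerSum, kmerSum, ← sum_sub_distrib]
    exact sum_congr rfl fun h _ => by simp only [d]; ring
  have hcross : ∀ p q, 1 ≤ p → p < q → 0 ≤ d p → 0 < d q := fun p q hp hpq hdp =>
    sub_pos.2 (pow_div_lt_pow_div_of_le hy₁ hy₂ hξ₁ hξ hp hpq (sub_nonneg.1 hdp))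
  have := sum_choose_mul_pos_of_sign_change hk hkl (by simp [d]) hcross
    (by rw [← hsub, h, sub_self])
  linarith [hsub l]

theorem stmt_9 (k l : ℕ) (hk : 1 ≤ k) (hkl : k < l) :
    Set.InjOn (fun p : ℝ × ℝ => (gkmer k p.1 p.2, gkmer l p.1 p.2))
      (Set.Ioi 0 ×ˢ Set.Ioi 0) := by
  rintro ⟨y₁, ξ₁⟩ ⟨hy₁, hξ₁⟩ ⟨y₂, ξ₂⟩ ⟨hy₂, hξ₂⟩ h
  simp only [Set.mem_Ioi] at hy₁ hξ₁ hy₂ hξ₂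
  simp only [Prod.mk.injEq, gkmer_eq_gkmer_iff] at h ⊢
  obtain ⟨hk_eq, hl_eq⟩ := h
  rcases lt_trichotomy ξ₁ ξ₂ with hξ | rfl | hξ
  · exact absurd hl_eq (kmerSum_lt_of_kmerSum_eq hk hkl hy₁ hy₂ hξ₁.le hξ hk_eq).ne
  · exact ⟨(kmerSum_strictMonoOn hk hξ₁.le).injOn hy₁.le hy₂.le hk_eq, rfl⟩
  · exact absurd hl_eq.symm (kmerSum_lt_of_kmerSum_eq hk hkl hy₂ hy₁ hξ₂.le hξ hk_eq.symm).ne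
end
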